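/- Let a, b be coprime positive integers such that H₁ = ⟨a, b⟩ is minimally generated by the two elements a, b, let c ∈ H₁ and d ∈ ℕ with c > 0, d > 1, c ∉ {a, b}, and gcd(c, d) = 1, and let H = ⟨da, db, c⟩ be the gluing of H₁ and ℕ. Then c(H) = d(ab − a − b) + (d−1)c + 1; equivalently, the Frobenius number of H is f(H) = d(ab − a − b) + (d−1)c. -/

import Mathlib

noncomputable section

/-- the conductor `c(H)` of a numerical semigroup `H` -/
def conductorN (H : AddSubmonoid ℕ) : ℕ := sInf {c : ℕ | ∀ n : ℕ, c ≤ n → n ∈ H}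

end

lemma mem_closure_triple {u v w n : ℕ} :
    n ∈ AddSubmonoid.closure ({u, v, w} : Set ℕ) ↔ ∃ x y z : ℕ, x * u + y * v + z * w = n := by
  constructor
  · intro h
    induction h using AddSubmonoid.closure_induction with
    | mem s hs =>
      simp only [Set.mem_insert_iff, Set.mem_singleton_iff] at hs
      rcases hs with rfl | rfl | rfl
      · exact ⟨1, 0, 0, by simp⟩
      · exact ⟨0, 1, 0, by simp⟩
      · exact ⟨0, 0, 1, by simp⟩
    | zero => exact ⟨0, 0, 0, by simp⟩
    | add p q _ _ hp hq =>
      obtain ⟨x, y, z, rfl⟩ := hp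
      obtain ⟨x', y', z', rfl⟩ := hq
      exact ⟨x + x', y + y', z + z', by ring⟩
  · rintro ⟨x, y, z, rfl⟩
    have hu : u ∈ AddSubmonoid.closure ({u, v, w} : Set ℕ) :=
      AddSubmonoid.subset_closure (by simp)
    have hv : v ∈ AddSubmonoid.closure ({u, v, w} : Set ℕ) :=
      AddSubmonoid.subset_closure (by simp)
    have hw : w ∈ AddSubmonoid.closure ({u, v, w} : Set ℕ) :=
      AddSubmonoid.subset_closure (by simp)
    exact add_mem (add_mem (by simpa [smul_eq_mul] using nsmul_mem hu x)
      (by simpa [smul_eq_mul] using nsmul_mem hv y))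
      (by simpa [smul_eq_mul] using nsmul_mem hw z)

/-- Let `a, b` be coprime positive integers such that `H₁ = ⟨a, b⟩` is minimally
generated by the two elements `a, b`, let `c ∈ H₁` and `d ∈ ℕ` with `c > 0`, `d > 1`,
`c ∉ {a, b}` and `gcd(c, d) = 1`, and let `H = ⟨da, db, c⟩` be the gluing of `H₁` and
`ℕ`.  Then `c(H) = d(ab - a - b) + (d-1)c + 1`, i.e. the Frobenius number of `H` is
`f(H) = d(ab - a - b) + (d-1)c`. -/
theorem conductor_of_gluing
    (a b : ℕ) (ha : 0 < a) (hb : 0 < b) (hab : Nat.gcd a b = 1)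
    (hmina : a ∉ AddSubmonoid.closure ({b} : Set ℕ))
    (hminb : b ∉ AddSubmonoid.closure ({a} : Set ℕ))
    (c d : ℕ) (hc : c ∈ AddSubmonoid.closure ({a, b} : Set ℕ)) (hc0 : 0 < c)
    (hd : 1 < d) (hca : c ≠ a) (hcb : c ≠ b) (hcd : Nat.gcd c d = 1) :
    (conductorN (AddSubmonoid.closure ({d * a, d * b, c} : Set ℕ)) : ℤ) =
      (d : ℤ) * ((a : ℤ) * b - a - b) + ((d : ℤ) - 1) * c + 1 := by
  -- a, b ≥ 2
  have ha2 : 2 ≤ a := by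
    rcases Nat.lt_or_ge a 2 with h | h
    · interval_cases a
      · exact absurd (AddSubmonoid.mem_closure_singleton.mpr ⟨b, by simp⟩) hminb
    · exact h
  have hb2 : 2 ≤ b := by
    rcases Nat.lt_or_ge b 2 with h | h
    · interval_cases b
      · exact absurd (AddSubmonoid.mem_closure_singleton.mpr ⟨a, by simp⟩) hmina
    · exact h
  have hmn : a + b ≤ a * b := Nat.add_le_mul ha2 hb2
  set e : ℕ := a * b - a - b with he_def
  have he : a * b = e + a + b := by omega
  have frob := frobeniusNumber_pair (show Nat.Coprime a b from hab) ha2 hb2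
  have hfe : e ∉ AddSubmonoid.closure ({a, b} : Set ℕ) := frob.1
  have hge : ∀ m : ℕ, e < m → m ∈ AddSubmonoid.closure ({a, b} : Set ℕ) := by
    intro m hm
    by_contra hmem
    exact absurd (frob.2 hmem) (by omega)
  set F : ℕ := d * e + (d - 1) * c with hF_def
  set H := AddSubmonoid.closure ({d * a, d * b, c} : Set ℕ) with hH
  have hd0 : 0 < d := by omega
  -- Step A : F ∉ H
  have hFnot : F ∉ H := by
    intro hF
    obtain ⟨x, y, k, heq⟩ := mem_closure_triple.mp hF
    rw [hF_def] at heq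
    have heqz : (x : ℤ) * (d * a) + y * (d * b) + k * c = d * e + (d - 1) * c := by
      have := congrArg (Nat.cast : ℕ → ℤ) heq
      push_cast [Nat.cast_sub hd.le] at this
      push_cast [Nat.cast_sub hd.le]
      linarith [this]
    have hdvd : (d : ℤ) ∣ (k + 1) * c :=
      ⟨(e : ℤ) + c - x * a - y * b, by linarith [heqz, mul_comm (d:ℤ) ((e:ℤ) + c - x*a - y*b)] ⟩
    have hdvdn : d ∣ (k + 1) * c := by exact_mod_cast hdvd
    have hdk : d ∣ (k + 1) :=
      (Nat.Coprime.dvd_of_dvd_mul_right (Nat.coprime_comm.mp hcd) hdvdn)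
    obtain ⟨s, hs⟩ := hdk
    have hs1 : 1 ≤ s := by
      rcases Nat.eq_zero_or_pos s with rfl | h
      · omega
      · omega
    have hk' : (k : ℤ) + 1 = d * s := by exact_mod_cast hs
    have hz : (x : ℤ) * a + y * b + ((s : ℤ) - 1) * c = e := by
      apply mul_left_cancel₀ (show (d : ℤ) ≠ 0 by positivity)
      linear_combination heqz - (c : ℤ) * hk'
    have hnat : x * a + y * b + (s - 1) * c = e := by
      zify [hs1]
      linarith [hz]
    apply hfe
    rw [← hnat]
    have hamem : a ∈ AddSubmonoid.closure ({a, b} : Set ℕ) :=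
      AddSubmonoid.subset_closure (by simp)
    have hbmem : b ∈ AddSubmonoid.closure ({a, b} : Set ℕ) :=
      AddSubmonoid.subset_closure (by simp)
    exact add_mem (add_mem (by simpa [smul_eq_mul] using nsmul_mem hamem x)
      (by simpa [smul_eq_mul] using nsmul_mem hbmem y))
      (by simpa [smul_eq_mul] using nsmul_mem hc (s - 1))
  -- Step B : everything above F is in H
  have hmemall : ∀ n : ℕ, F + 1 ≤ n → n ∈ H := by
    intro n hn
    haveI : NeZero d := ⟨by omega⟩
    have hunit : IsUnit ((c : ZMod d)) := (ZMod.isUnit_iff_coprime c d).mpr hcd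
    set k := ((n : ZMod d) * (c : ZMod d)⁻¹).val with hk_def
    have hk : k < d := ZMod.val_lt _
    have hkc : k * c ≡ n [MOD d] := by
      have hcast : ((k * c : ℕ) : ZMod d) = (n : ZMod d) := by
        push_cast
        rw [ZMod.natCast_val, ZMod.cast_id, mul_assoc, ZMod.inv_mul_of_unit _ hunit, mul_one]
      exact (ZMod.natCast_eq_natCast_iff _ _ _).mp hcast
    have hkc1 : k * c ≤ (d - 1) * c := Nat.mul_le_mul_right c (by omega)
    have hkcn : k * c ≤ n := by
      calc k * c ≤ (d - 1) * c := hkc1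
        _ ≤ d * e + (d - 1) * c := Nat.le_add_left _ _
        _ = F := hF_def.symm
        _ ≤ n := by omega
    obtain ⟨m, hm⟩ := (Nat.modEq_iff_dvd' hkcn).mp hkc
    have hn_eq : n = d * m + k * c := by omega
    have hme : e < m := by
      by_contra hle
      push_neg at hle
      have h2 : d * m ≤ d * e := Nat.mul_le_mul_left d hle
      have h3 : F + 1 ≤ d * m + k * c := by omega
      rw [hF_def] at h3
      omega
    obtain ⟨x, y, hxy⟩ := (AddSubmonoid.mem_closure_pair a b m).mp (hge m hme)
    simp only [smul_eq_mul] at hxy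
    refine mem_closure_triple.mpr ⟨x, y, k, ?_⟩
    rw [hn_eq, ← hxy]
    ring
  -- compute the conductor
  have hset : conductorN H = F + 1 := by
    unfold conductorN
    have hmemS : (F + 1) ∈ {c' : ℕ | ∀ n : ℕ, c' ≤ n → n ∈ H} := hmemall
    refine le_antisymm (Nat.sInf_le hmemS) ?_
    have hmem' := Nat.sInf_mem ⟨F + 1, hmemS⟩
    by_contra hlt
    push_neg at hlt
    exact hFnot (hmem' F (by omega))
  rw [hset]
  have he' : (e : ℤ) = (a : ℤ) * b - a - b := by
    have := congrArg (Nat.cast : ℕ → ℤ) he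
    push_cast at this
    linarith
  rw [hF_def]
  push_cast [Nat.cast_sub hd.le]
  linear_combination (d : ℤ) * he'
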